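/- Let h : |Δ| → ℚ^k be a convex support map on a quasifan Δ in a lattice N, and let Σ_h be its associated quasifan. Then (i) every cone of Δ is contained in a cone of Σ_h, and (ii) every cone σ ∈ Σ_h is generated by the cones τ ∈ Δ with τ ⊂ σ. -/
import Mathlib


/-! Convex geometry over ℚ: polyhedral cones, quasifans, fans, support maps. -/

namespace ToricQuot

variable {E V : Type} [AddCommGroup E] [Module ℚ E] [AddCommGroup V] [Module ℚ V]

/-- The convex cone generated by a set: all finite nonnegative rational combinations. -/
def coneHull (s : Set E) : Set E :=
  {x | ∃ (m : ℕ) (c : Fin m → ℚ) (v : Fin m → E),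
    (∀ i, 0 ≤ c i) ∧ (∀ i, v i ∈ s) ∧ x = ∑ i, c i • v i}

/-- A (rational) polyhedral convex cone: the conic hull of a finite set. -/
def IsPolyCone (σ : Set E) : Prop := ∃ s : Set E, s.Finite ∧ σ = coneHull s

/-- `F` is a face of the cone `σ`: it is cut out of `σ` by a supporting linear form. -/
def IsFaceOf (F σ : Set E) : Prop :=
  ∃ u : E →ₗ[ℚ] ℚ, (∀ x ∈ σ, 0 ≤ u x) ∧ F = {x ∈ σ | u x = 0}

/-- The relative interior of a cone: points not lying on any proper face. -/
def relint (σ : Set E) : Set E :=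
  {x ∈ σ | ∀ F, IsFaceOf F σ → x ∈ F → F = σ}

/-- A quasifan: a finite set of polyhedral cones, closed under taking faces, such that
the intersection of any two of its cones is a face of each. -/
def IsQuasifan (Λ : Set (Set E)) : Prop :=
  Λ.Finite ∧ (∀ σ ∈ Λ, IsPolyCone σ) ∧
  (∀ σ ∈ Λ, ∀ F, IsFaceOf F σ → F ∈ Λ) ∧
  (∀ σ ∈ Λ, ∀ τ ∈ Λ, IsFaceOf (σ ∩ τ) σ)

/-- A cone is strictly convex (pointed) if it contains no line. -/
def IsPointed (σ : Set E) : Prop := σ ∩ (-σ) ⊆ {0}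

/-- A fan: a quasifan all of whose cones are strictly convex. -/
def IsFan (Λ : Set (Set E)) : Prop := IsQuasifan Λ ∧ ∀ σ ∈ Λ, IsPointed σ

/-- The support of a quasifan. -/
def fanSupp (Λ : Set (Set E)) : Set E := ⋃₀ Λ

/-- A support map on a quasifan `Δ`: a map that is linear on every cone of `Δ`. -/
def IsSupportMap (Δ : Set (Set E)) (h : E → V) : Prop :=
  ∀ σ ∈ Δ, ∃ L : E →ₗ[ℚ] V, ∀ x ∈ σ, h x = L x

/-- The graph of a support map over the support of the quasifan. -/
def graphOf (Δ : Set (Set E)) (h : E → V) : Set (E × V) :=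
  {p | ∃ v ∈ fanSupp Δ, p = (v, h v)}

/-- The cone generated by the graph of a support map. -/
def gammaCone (Δ : Set (Set E)) (h : E → V) : Set (E × V) := coneHull (graphOf Δ h)

/-- The filled graph `Λ_h`: the minimal subquasifan of the face quasifan of `γ` whose
support contains the graph, i.e. it is generated by the faces of `γ` whose relative
interior meets the graph. -/
def filledGraph (Δ : Set (Set E)) (h : E → V) : Set (Set (E × V)) :=
  {δ | ∃ δ', IsFaceOf δ' (gammaCone Δ h) ∧ (relint δ' ∩ graphOf Δ h).Nonempty ∧
    IsFaceOf δ δ'}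

/-- A support map is convex if the projection to the first factor is injective on the
support of the filled graph. -/
def IsConvexSM (Δ : Set (Set E)) (h : E → V) : Prop :=
  IsSupportMap Δ h ∧ Set.InjOn (Prod.fst : E × V → E) (⋃₀ filledGraph Δ h)

/-- The quasifan `Σ_h` associated to a convex support map: the projections of the cones
of the filled graph. -/
def sigmaFan (Δ : Set (Set E)) (h : E → V) : Set (Set E) :=
  (Set.image (Prod.fst : E × V → E)) '' filledGraph Δ h

/-- A strictly convex support map. -/
def IsStrictlyConvexSM (Δ : Set (Set E)) (h : E → V) : Prop :=
  IsConvexSM Δ h ∧ sigmaFan Δ h = Δ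


/-! ### Auxiliary lemmas -/

/-- A set closed under the convex-cone operations. -/
def IsConeSet (C : Set E) : Prop :=
  (0 : E) ∈ C ∧ (∀ x ∈ C, ∀ y ∈ C, x + y ∈ C) ∧ ∀ (c : ℚ), 0 ≤ c → ∀ x ∈ C, c • x ∈ C

lemma subset_coneHull (s : Set E) : s ⊆ coneHull s := by
  intro x hx
  exact ⟨1, fun _ => 1, fun _ => x, fun _ => zero_le_one, fun _ => hx, by simp⟩

lemma isConeSet_coneHull (s : Set E) : IsConeSet (coneHull s) := by
  refine ⟨⟨0, Fin.elim0, Fin.elim0, fun i => i.elim0, fun i => i.elim0, by simp⟩, ?_, ?_⟩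
  · rintro x ⟨m, c, v, hc, hv, rfl⟩ y ⟨m', c', v', hc', hv', rfl⟩
    refine ⟨m + m', Fin.addCases c c', Fin.addCases v v', ?_, ?_, ?_⟩
    · intro i
      induction i using Fin.addCases with
      | left j => simpa using hc j
      | right j => simpa using hc' j
    · intro i
      induction i using Fin.addCases with
      | left j => simpa using hv j
      | right j => simpa using hv' j
    · rw [Fin.sum_univ_add]
      congr 1 <;> exact Finset.sum_congr rfl (fun j _ => by simp)
  · rintro a ha x ⟨m, c, v, hc, hv, rfl⟩
    refine ⟨m, fun i => a * c i, v, fun i => mul_nonneg ha (hc i), hv, ?_⟩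
    rw [Finset.smul_sum]
    exact Finset.sum_congr rfl (fun i _ => (mul_smul a (c i) (v i)).symm)

lemma coneHull_subset {s C : Set E} (hC : IsConeSet C) (hs : s ⊆ C) : coneHull s ⊆ C := by
  rintro x ⟨m, c, v, hc, hv, rfl⟩
  exact Finset.sum_induction _ (· ∈ C) (fun a b ha hb => hC.2.1 a ha b hb) hC.1
    (fun i _ => hC.2.2 (c i) (hc i) (v i) (hs (hv i)))

lemma mem_coneHull_of_rep {t : Set E} {m : ℕ} {c : Fin m → ℚ} {v : Fin m → E} {x : E}
    (hc : ∀ i, 0 ≤ c i) (hv : ∀ i, c i ≠ 0 → v i ∈ t) (hx : x = ∑ i, c i • v i) :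
    x ∈ coneHull t := by
  classical
  by_cases hall : ∀ i, c i = 0
  · have hx0 : x = 0 := by
      rw [hx]; exact Finset.sum_eq_zero fun i _ => by rw [hall i, zero_smul]
    rw [hx0]; exact (isConeSet_coneHull t).1
  · push_neg at hall
    obtain ⟨i₀, hi₀⟩ := hall
    refine ⟨m, c, fun i => if c i = 0 then v i₀ else v i, hc, ?_, ?_⟩
    · intro i
      by_cases hci : c i = 0
      · simp only [hci, if_pos rfl]; simpa using hv i₀ hi₀
      · simp only [if_neg hci]; exact hv i hci
    · rw [hx]
      refine Finset.sum_congr rfl fun i _ => ?_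
      by_cases hci : c i = 0
      · simp [hci]
      · simp [hci]

lemma IsFaceOf.subset' {F σ : Set E} (h : IsFaceOf F σ) : F ⊆ σ := by
  obtain ⟨u, _, rfl⟩ := h
  exact fun x hx => hx.1

lemma isFaceOf_refl (σ : Set E) : IsFaceOf σ σ :=
  ⟨0, fun x _ => le_refl 0, by ext x; simp⟩

lemma IsFaceOf.isConeSet {F σ : Set E} (hσ : IsConeSet σ) (h : IsFaceOf F σ) :
    IsConeSet F := by
  obtain ⟨u, hu, rfl⟩ := h
  refine ⟨⟨hσ.1, map_zero u⟩, ?_, ?_⟩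
  · rintro x ⟨hx, hx0⟩ y ⟨hy, hy0⟩
    exact ⟨hσ.2.1 x hx y hy, by rw [map_add, hx0, hy0, add_zero]⟩
  · rintro a ha x ⟨hx, hx0⟩
    exact ⟨hσ.2.2 a ha x hx, by rw [map_smul, hx0, smul_zero]⟩

lemma terms_zero {m : ℕ} {c : Fin m → ℚ} {g : Fin m → E} (u : E →ₗ[ℚ] ℚ)
    (hc : ∀ i, 0 ≤ c i) (hg : ∀ i, 0 ≤ u (g i)) (h0 : u (∑ i, c i • g i) = 0) :
    ∀ i, c i ≠ 0 → u (g i) = 0 := by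
  have hsum : ∑ i, c i * u (g i) = 0 := by
    rw [← h0, map_sum]
    exact Finset.sum_congr rfl fun i _ => by rw [map_smul, smul_eq_mul]
  intro i hi
  have hterm := (Finset.sum_eq_zero_iff_of_nonneg
    (fun j _ => mul_nonneg (hc j) (hg j))).mp hsum i (Finset.mem_univ i)
  rcases mul_eq_zero.mp hterm with hcz | huz
  · exact absurd hcz hi
  · exact huz

lemma face_eq_coneHull_inter {s F : Set E} (hF : IsFaceOf F (coneHull s)) :
    F = coneHull (s ∩ F) := by
  obtain ⟨u, hu, hFe⟩ := hF
  apply Set.Subset.antisymm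
  · intro x hx
    rw [hFe] at hx
    obtain ⟨hxσ, hux⟩ := hx
    obtain ⟨m, c, v, hc, hv, hxe⟩ := hxσ
    refine mem_coneHull_of_rep hc (fun i hci => ⟨hv i, ?_⟩) hxe
    have huvi : u (v i) = 0 :=
      terms_zero u hc (fun j => hu _ (subset_coneHull s (hv j))) (by rw [← hxe, hux]) i hci
    rw [hFe]
    exact ⟨subset_coneHull s (hv i), huvi⟩
  · exact coneHull_subset
      (IsFaceOf.isConeSet (isConeSet_coneHull s) ⟨u, hu, hFe⟩)
      (fun z hz => hz.2)

lemma face_trans {s : Set E} (hs : s.Finite) {F G : Set E}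
    (hF : IsFaceOf F (coneHull s)) (hG : IsFaceOf G F) : IsFaceOf G (coneHull s) := by
  classical
  have hFcs : IsConeSet F := IsFaceOf.isConeSet (isConeSet_coneHull s) hF
  have hGcs : IsConeSet G := IsFaceOf.isConeSet hFcs hG
  obtain ⟨u, hu, hFe⟩ := hF
  obtain ⟨w, hw, hGe⟩ := hG
  set M : ℚ := 1 + ∑ v ∈ hs.toFinset, max 0 (-(w v) / u v) with hM
  have hMv : ∀ v ∈ s, u v ≠ 0 → 0 < w v + M * u v := by
    intro v hv huv
    have hupos : 0 < u v := lt_of_le_of_ne (hu v (subset_coneHull s hv)) (Ne.symm huv)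
    have h1 : -(w v) / u v ≤ ∑ x ∈ hs.toFinset, max 0 (-(w x) / u x) :=
      le_trans (le_max_right _ _)
        (Finset.single_le_sum (f := fun x => max 0 (-(w x) / u x)) (fun x _ => le_max_left _ _) (hs.mem_toFinset.mpr hv))
    have h2 : -(w v) / u v < M := by rw [hM]; linarith
    have h3 := (div_lt_iff₀ hupos).mp h2
    linarith
  have hkey : ∀ v ∈ s, 0 ≤ w v + M * u v := by
    intro v hv
    by_cases huv : u v = 0
    · have hvF : v ∈ F := hFe ▸ ⟨subset_coneHull s hv, huv⟩
      have := hw v hvF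
      rw [huv]; linarith
    · exact le_of_lt (hMv v hv huv)
  have happ : ∀ z : E, (w + M • u) z = w z + M * u z := by
    intro z; simp [smul_eq_mul]
  refine ⟨w + M • u, ?_, ?_⟩
  · rintro x ⟨m, c, vv, hc, hv, rfl⟩
    have heq : (w + M • u) (∑ i, c i • vv i) = ∑ i, c i * (w (vv i) + M * u (vv i)) := by
      rw [map_sum]
      exact Finset.sum_congr rfl fun i _ => by rw [map_smul, smul_eq_mul, happ]
    rw [heq]
    exact Finset.sum_nonneg fun i _ => mul_nonneg (hc i) (hkey _ (hv i))
  · apply Set.Subset.antisymm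
    · intro x hxG
      have hxF : x ∈ F := IsFaceOf.subset' ⟨w, hw, hGe⟩ hxG
      have hwx : w x = 0 := by
        rw [hGe] at hxG; exact hxG.2
      have hxσ : x ∈ coneHull s := by
        rw [hFe] at hxF; exact hxF.1
      have hux : u x = 0 := by
        rw [hFe] at hxF; exact hxF.2
      exact ⟨hxσ, by rw [happ, hwx, hux]; ring⟩
    · rintro x ⟨hxσ, hux⟩
      obtain ⟨m, c, vv, hc, hv, hxe⟩ := hxσ
      have hterms : ∀ i, c i ≠ 0 → (w + M • u) (vv i) = 0 := by
        refine terms_zero (w + M • u) hc (fun j => ?_) (by rw [← hxe, hux])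
        rw [happ]; exact hkey _ (hv j)
      have hvvG : ∀ i, c i ≠ 0 → vv i ∈ G := by
        intro i hci
        have h0 := hterms i hci
        rw [happ] at h0
        have huvv : u (vv i) = 0 := by
          by_contra hne
          exact absurd h0 (ne_of_gt (hMv _ (hv i) hne))
        have hwvv : w (vv i) = 0 := by rw [huvv] at h0; linarith
        have hvF : vv i ∈ F := hFe ▸ ⟨subset_coneHull s (hv i), huvv⟩
        rw [hGe]; exact ⟨hvF, hwvv⟩
      exact coneHull_subset hGcs (le_refl G) (mem_coneHull_of_rep hc hvvG hxe)

lemma exists_face_relint {s : Set E} (hs : s.Finite) {p : E} (hp : p ∈ coneHull s) :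
    ∃ F, IsFaceOf F (coneHull s) ∧ p ∈ relint F := by
  classical
  set N : Set ℕ := {n | ∃ F, IsFaceOf F (coneHull s) ∧ p ∈ F ∧ (s ∩ F).ncard = n} with hN
  have hne : N.Nonempty :=
    ⟨(s ∩ coneHull s).ncard, coneHull s, isFaceOf_refl _, hp, rfl⟩
  obtain ⟨F, hFface, hpF, hcard⟩ := Nat.sInf_mem hne
  refine ⟨F, hFface, hpF, fun G hG hpG => ?_⟩
  have hGσ : IsFaceOf G (coneHull s) := face_trans hs hFface hG
  have hle : (s ∩ F).ncard ≤ (s ∩ G).ncard := by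
    rw [hcard]
    exact Nat.sInf_le ⟨G, hGσ, hpG, rfl⟩
  have hsub : s ∩ G ⊆ s ∩ F := Set.inter_subset_inter_right s (IsFaceOf.subset' hG)
  have heq : s ∩ G = s ∩ F :=
    Set.eq_of_subset_of_ncard_le hsub hle (hs.inter_of_left F)
  rw [face_eq_coneHull_inter hGσ, face_eq_coneHull_inter hFface, heq]

lemma mem_graphOf {Δ : Set (Set E)} {h : E → V} {τ : Set E} (hτ : τ ∈ Δ) {y : E}
    (hy : y ∈ τ) : (y, h y) ∈ graphOf Δ h :=
  ⟨y, ⟨τ, hτ, hy⟩, rfl⟩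

lemma pair_sum_eq {m : ℕ} (c : Fin m → ℚ) (w : Fin m → E) (L : E →ₗ[ℚ] V) (h : E → V)
    (hhw : ∀ i, h (w i) = L (w i)) {x : E} (hx : x = ∑ i, c i • w i) :
    ((x, L x) : E × V) = ∑ i, c i • (w i, h (w i)) := by
  have : ∑ i, c i • ((w i, h (w i)) : E × V) = (∑ i, c i • w i, ∑ i, c i • L (w i)) := by
    apply Prod.ext
    · rw [Prod.fst_sum]
      exact Finset.sum_congr rfl fun i _ => by rw [Prod.smul_mk]
    · rw [Prod.snd_sum]
      exact Finset.sum_congr rfl fun i _ => by rw [Prod.smul_mk, hhw i]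
  rw [this, hx]
  apply Prod.ext
  · rfl
  · simp only [map_sum, map_smul]

lemma gamma_poly {Δ : Set (Set E)} {h : E → V} (hΔ : IsQuasifan Δ)
    (hsm : IsSupportMap Δ h) :
    ∃ S : Set (E × V), S.Finite ∧ S ⊆ graphOf Δ h ∧ gammaCone Δ h = coneHull S := by
  classical
  choose gen hgenfin hgeneq using hΔ.2.1
  haveI : Finite ↥Δ := hΔ.1.to_subtype
  refine ⟨⋃ σ : Δ, (fun v => (v, h v)) '' gen σ.1 σ.2, ?_, ?_, ?_⟩
  · exact Set.finite_iUnion fun σ => (hgenfin σ.1 σ.2).image _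
  · rintro p hp
    obtain ⟨σ, hpσ⟩ := Set.mem_iUnion.mp hp
    obtain ⟨v, hv, rfl⟩ := hpσ
    refine ⟨v, ⟨σ.1, σ.2, ?_⟩, rfl⟩
    rw [hgeneq σ.1 σ.2]
    exact subset_coneHull _ hv
  · apply Set.Subset.antisymm
    · apply coneHull_subset (isConeSet_coneHull _)
      rintro p ⟨v, ⟨σ₀, hσ₀, hvσ₀⟩, rfl⟩
      obtain ⟨L, hL⟩ := hsm σ₀ hσ₀
      have hvrep : v ∈ coneHull (gen σ₀ hσ₀) := by rw [← hgeneq σ₀ hσ₀]; exact hvσ₀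
      obtain ⟨m, c, w, hc, hw, hve⟩ := hvrep
      have hwσ : ∀ i, w i ∈ σ₀ := fun i => by
        rw [hgeneq σ₀ hσ₀]; exact subset_coneHull _ (hw i)
      have hpe : ((v, h v) : E × V) = ∑ i, c i • (w i, h (w i)) := by
        rw [hL v hvσ₀]
        exact pair_sum_eq c w L h (fun i => hL (w i) (hwσ i)) hve
      refine ⟨m, c, fun i => (w i, h (w i)), hc, ?_, hpe⟩
      intro i
      exact Set.mem_iUnion.mpr ⟨⟨σ₀, hσ₀⟩, Set.mem_image_of_mem _ (hw i)⟩
    · apply coneHull_subset (isConeSet_coneHull _)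
      rintro p hp
      obtain ⟨σ, hpσ⟩ := Set.mem_iUnion.mp hp
      obtain ⟨v, hv, rfl⟩ := hpσ
      apply subset_coneHull
      refine ⟨v, ⟨σ.1, σ.2, ?_⟩, rfl⟩
      rw [hgeneq σ.1 σ.2]
      exact subset_coneHull _ hv

lemma isConeSet_fst {C : Set (E × V)} (hC : IsConeSet C) :
    IsConeSet (Prod.fst '' C) := by
  refine ⟨⟨0, hC.1, rfl⟩, ?_, ?_⟩
  · rintro _ ⟨a, ha, rfl⟩ _ ⟨b, hb, rfl⟩
    exact ⟨a + b, hC.2.1 a ha b hb, rfl⟩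
  · rintro c hc _ ⟨a, ha, rfl⟩
    exact ⟨c • a, hC.2.2 c hc a ha, rfl⟩

end ToricQuot

open ToricQuot in
/-- **Lemma 2.7.** Let `Σ_h` be the quasifan associated to a convex support map
`h : |Δ| → ℚ^k` on a quasifan `Δ`. Then (i) every cone of `Δ` is contained in a cone of
`Σ_h`, and (ii) every cone `σ ∈ Σ_h` is generated by the cones `τ ∈ Δ` with `τ ⊆ σ`. -/
theorem sigmaFan_properties (n k : ℕ) (Δ : Set (Set (Fin n → ℚ)))
    (h : (Fin n → ℚ) → (Fin k → ℚ)) (hΔ : IsQuasifan Δ)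
    (hconv : IsConvexSM Δ h) :
    (∀ σ ∈ Δ, ∃ τ ∈ sigmaFan Δ h, σ ⊆ τ) ∧
    (∀ σ ∈ sigmaFan Δ h, σ = coneHull (⋃₀ {τ | τ ∈ Δ ∧ τ ⊆ σ})) := by
  classical
  obtain ⟨S, hSfin, hSsub, hγ⟩ := gamma_poly hΔ hconv.1
  have hγcs : IsConeSet (gammaCone Δ h) := isConeSet_coneHull _
  have hgraphγ : graphOf Δ h ⊆ gammaCone Δ h := subset_coneHull _
  constructor
  · -- part (i)
    intro σ hσ
    obtain ⟨L, hL⟩ := hconv.1 σ hσ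
    obtain ⟨s, hsfin, rfl⟩ := hΔ.2.1 σ hσ
    set x₀ : Fin n → ℚ := ∑ v ∈ hsfin.toFinset, v with hx₀
    have hx₀σ : x₀ ∈ coneHull s := by
      refine Finset.sum_induction _ (· ∈ coneHull s)
        (fun a b ha hb => (isConeSet_coneHull s).2.1 a ha b hb)
        (isConeSet_coneHull s).1 (fun v hv => subset_coneHull s (hsfin.mem_toFinset.mp hv))
    set p : (Fin n → ℚ) × (Fin k → ℚ) := (x₀, h x₀) with hpdef
    have hpg : p ∈ graphOf Δ h := mem_graphOf hσ hx₀σ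
    have hpS : p ∈ coneHull S := by rw [← hγ]; exact hgraphγ hpg
    obtain ⟨F, hFface, hFrel⟩ := exists_face_relint hSfin hpS
    have hFγ : IsFaceOf F (gammaCone Δ h) := hγ ▸ hFface
    have hFmem : F ∈ filledGraph Δ h := ⟨F, hFγ, ⟨p, hFrel, hpg⟩, isFaceOf_refl F⟩
    refine ⟨Prod.fst '' F, Set.mem_image_of_mem _ hFmem, ?_⟩
    obtain ⟨u, hu, hFe⟩ := hFγ
    have hFcs : IsConeSet F := IsFaceOf.isConeSet hγcs ⟨u, hu, hFe⟩
    -- p = sum of graph points over generators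
    have hpsum : p = ∑ v ∈ hsfin.toFinset, (1 : ℚ) • ((v, h v) : (Fin n → ℚ) × (Fin k → ℚ)) := by
      have hhw : ∀ v ∈ hsfin.toFinset, h v = L v := fun v hv =>
        hL v (subset_coneHull s (hsfin.mem_toFinset.mp hv))
      rw [hpdef, hL x₀ hx₀σ]
      apply Prod.ext
      · rw [Prod.fst_sum]
        simp [hx₀]
      · rw [Prod.snd_sum, hx₀, map_sum]
        refine Finset.sum_congr rfl fun v hv => by simp [hhw v hv]
    have hup : u p = 0 := by
      have hpF : p ∈ F := hFrel.1
      rw [hFe] at hpF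
      exact hpF.2
    have hgen_in_F : ∀ v ∈ hsfin.toFinset, ((v, h v) : (Fin n → ℚ) × (Fin k → ℚ)) ∈ F := by
      have hsum0 : ∑ v ∈ hsfin.toFinset, u ((v, h v) : (Fin n → ℚ) × (Fin k → ℚ)) = 0 := by
        rw [← hup, hpsum, map_sum]
        exact Finset.sum_congr rfl fun v _ => by rw [map_smul]; simp
      have hnn : ∀ v ∈ hsfin.toFinset,
          0 ≤ u ((v, h v) : (Fin n → ℚ) × (Fin k → ℚ)) := fun v hv =>
        hu _ (hgraphγ (mem_graphOf hσ (subset_coneHull s (hsfin.mem_toFinset.mp hv))))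
      intro v hv
      have := (Finset.sum_eq_zero_iff_of_nonneg hnn).mp hsum0 v hv
      rw [hFe]
      exact ⟨hgraphγ (mem_graphOf hσ (subset_coneHull s (hsfin.mem_toFinset.mp hv))), this⟩
    intro x hx
    obtain ⟨m, c, w, hc, hw, hxe⟩ := hx
    have hwσ : ∀ i, w i ∈ coneHull s := fun i => subset_coneHull s (hw i)
    have hpair : ((x, h x) : (Fin n → ℚ) × (Fin k → ℚ)) = ∑ i, c i • (w i, h (w i)) := by
      rw [hL x ⟨m, c, w, hc, hw, hxe⟩]
      exact pair_sum_eq c w L h (fun i => hL (w i) (hwσ i)) hxe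
    have hxF : ((x, h x) : (Fin n → ℚ) × (Fin k → ℚ)) ∈ F := by
      rw [hpair]
      exact Finset.sum_induction _ (· ∈ F) (fun a b ha hb => hFcs.2.1 a ha b hb) hFcs.1
        (fun i _ => hFcs.2.2 (c i) (hc i) _
          (hgen_in_F (w i) (hsfin.mem_toFinset.mpr (hw i))))
    exact ⟨(x, h x), hxF, rfl⟩
  · -- part (ii)
    rintro σ ⟨δ, hδmem, rfl⟩
    obtain ⟨δ', hδ'face, _, hδface⟩ := hδmem
    have hδγ : IsFaceOf δ (gammaCone Δ h) := by
      rw [hγ] at hδ'face ⊢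
      exact face_trans hSfin hδ'face hδface
    obtain ⟨u, hu, hδe⟩ := hδγ
    have hδcs : IsConeSet δ := IsFaceOf.isConeSet hγcs ⟨u, hu, hδe⟩
    set σ := Prod.fst '' δ with hσdef
    have hσcs : IsConeSet σ := isConeSet_fst hδcs
    -- key claim
    have claim : ∀ w : Fin n → ℚ, w ∈ fanSupp Δ →
        ((w, h w) : (Fin n → ℚ) × (Fin k → ℚ)) ∈ δ → ∃ τ ∈ Δ, τ ⊆ σ ∧ w ∈ τ := by
      intro w hwsupp hwδ
      obtain ⟨ρ, hρΔ, hwρ⟩ := hwsupp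
      obtain ⟨sρ, hsρfin, hρeq⟩ := hΔ.2.1 ρ hρΔ
      have hwρ' : w ∈ coneHull sρ := by rw [← hρeq]; exact hwρ
      obtain ⟨τ, hτface, hτrel⟩ := exists_face_relint hsρfin hwρ'
      have hτΔ : τ ∈ Δ := hΔ.2.2.1 ρ hρΔ τ (hρeq ▸ hτface)
      obtain ⟨L, hLτ⟩ := hconv.1 τ hτΔ
      set φ : (Fin n → ℚ) →ₗ[ℚ] ℚ := u ∘ₗ (LinearMap.id.prod L) with hφ
      have hφapp : ∀ y, φ y = u (y, L y) := fun y => rfl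
      have hτγ : ∀ y ∈ τ, ((y, h y) : (Fin n → ℚ) × (Fin k → ℚ)) ∈ gammaCone Δ h :=
        fun y hy => hgraphγ (mem_graphOf hτΔ hy)
      have hφnn : ∀ y ∈ τ, 0 ≤ φ y := by
        intro y hy
        rw [hφapp, ← hLτ y hy]
        exact hu _ (hτγ y hy)
      have hGface : IsFaceOf {y ∈ τ | φ y = 0} τ := ⟨φ, hφnn, rfl⟩
      have hwG : w ∈ {y ∈ τ | φ y = 0} := by
        refine ⟨hτrel.1, ?_⟩
        rw [hφapp, ← hLτ w hτrel.1]
        rw [hδe] at hwδ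
        exact hwδ.2
      have hGτ : {y ∈ τ | φ y = 0} = τ := hτrel.2 _ hGface hwG
      refine ⟨τ, hτΔ, ?_, hτrel.1⟩
      intro y hy
      have hyG : y ∈ {y ∈ τ | φ y = 0} := by rw [hGτ]; exact hy
      have hyδ : ((y, h y) : (Fin n → ℚ) × (Fin k → ℚ)) ∈ δ := by
        rw [hδe]
        refine ⟨hτγ y hy, ?_⟩
        rw [hLτ y hy, ← hφapp]
        exact hyG.2
      exact ⟨(y, h y), hyδ, rfl⟩
    apply Set.Subset.antisymm
    · rintro x ⟨z, hzδ, rfl⟩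
      have hzγ : z ∈ coneHull (graphOf Δ h) := IsFaceOf.subset' ⟨u, hu, hδe⟩ hzδ
      obtain ⟨m, c, g, hc, hg, hze⟩ := hzγ
      have huz : u z = 0 := by rw [hδe] at hzδ; exact hzδ.2
      have hterms : ∀ i, c i ≠ 0 → u (g i) = 0 :=
        terms_zero u hc (fun j => hu _ (hgraphγ (hg j))) (by rw [← hze, huz])
      have hx1 : z.1 = ∑ i, c i • (g i).1 := by
        rw [hze, Prod.fst_sum]
        exact Finset.sum_congr rfl fun i _ => rfl
      refine mem_coneHull_of_rep hc (fun i hci => ?_) hx1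
      obtain ⟨wi, hwi, hgie⟩ := hg i
      have hgiδ : g i ∈ δ := by
        rw [hδe]
        exact ⟨hgraphγ (hg i), hterms i hci⟩
      obtain ⟨τ, hτΔ, hτσ, hwτ⟩ := claim wi hwi (hgie ▸ hgiδ)
      have : (g i).1 = wi := by rw [hgie]
      rw [this]
      exact ⟨τ, ⟨hτΔ, hτσ⟩, hwτ⟩
    · refine coneHull_subset hσcs ?_
      exact Set.sUnion_subset fun τ hτ => hτ.2
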